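/- arXiv:2505.21195 — 2 statements merged into one kernel-verified Lean document; each statement's English description precedes it below -/
import Mathlib

section
/- For d ≥ 1 an integer and γ ∈ (1, 2), the function λ ↦ λ^{−γ} ∫_{ℝ^d} (∫_{B(1)} e^{−λ‖y−u‖} dy)^γ du (where B(1) is the unit ball in ℝ^d) is finite for every λ > 0 and satisfies: it is O(λ^{−γ−d}) as λ → 0 and O(λ^{−γ(1+d)}) as λ → ∞. -/
open MeasureTheory Real Filter Asymptotics Set Metric Module
open scoped Convolution

/-!
Write `g_l(u) = ∫_{B(1)} exp (-l ‖y - u‖) dy`. It is the convolution of the indicator of `B(1)`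
with `exp (-l ‖·‖)`, so `∫ g_l = |B(1)| l^(-d) ∫ exp (-‖x‖)`. Since `γ ≥ 1`,
`∫ g_l^γ ≤ (sup g_l)^(γ-1) ∫ g_l`, and `sup g_l` is bounded both by `|B(1)|` and by
`∫ exp (-l ‖x‖) = l^(-d) ∫ exp (-‖x‖)`. For every `l > 0` the first bound gives
`∫ g_l^γ ≲ l^(-d)`, the second `∫ g_l^γ ≲ l^(-γ d)`.
-/

theorem rpow_le_rpow_sub_one_mul {x M p : ℝ} (hx : 0 ≤ x) (hxM : x ≤ M) (hp : 1 ≤ p) :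
    x ^ p ≤ M ^ (p - 1) * x := by
  calc x ^ p = x ^ (p - 1) * x := by
        rw [← rpow_add_one' hx (by linarith), sub_add_cancel]
    _ ≤ M ^ (p - 1) * x := by gcongr

section RpowOfBounded

variable {α : Type*} [MeasurableSpace α] {ν : Measure α} {f : α → ℝ} {M p : ℝ}

theorem MeasureTheory.Integrable.rpow_of_le (hf : Integrable f ν) (h0 : ∀ x, 0 ≤ f x)
    (hM : ∀ x, f x ≤ M) (hp : 1 ≤ p) : Integrable (fun x => f x ^ p) ν :=
  (hf.const_mul (M ^ (p - 1))).mono'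
    (hf.aestronglyMeasurable.aemeasurable.pow_const p).aestronglyMeasurable
    (.of_forall fun x => by
      rw [norm_of_nonneg (rpow_nonneg (h0 x) p)]
      exact rpow_le_rpow_sub_one_mul (h0 x) (hM x) hp)

theorem integral_rpow_le_of_le (hf : Integrable f ν) (h0 : ∀ x, 0 ≤ f x) (hM : ∀ x, f x ≤ M)
    (hp : 1 ≤ p) : ∫ x, f x ^ p ∂ν ≤ M ^ (p - 1) * ∫ x, f x ∂ν := by
  rw [← integral_const_mul]
  exact integral_mono (hf.rpow_of_le h0 hM hp) (hf.const_mul _)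
    fun x => rpow_le_rpow_sub_one_mul (h0 x) (hM x) hp

end RpowOfBounded

theorem isBigO_rpow_mul_of_le {L : Filter ℝ} (hL : ∀ᶠ x in L, 0 < x) {G : ℝ → ℝ} {C a b : ℝ}
    (hG0 : ∀ x, 0 < x → 0 ≤ G x) (hG : ∀ x, 0 < x → G x ≤ C * x ^ b) :
    (fun x => x ^ a * G x) =O[L] fun x => x ^ (a + b) := by
  refine .of_bound C ?_
  filter_upwards [hL] with x hx
  rw [norm_of_nonneg (mul_nonneg (rpow_nonneg hx.le a) (hG0 x hx)),
    norm_of_nonneg (rpow_nonneg hx.le _), rpow_add hx]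
  calc x ^ a * G x ≤ x ^ a * (C * x ^ b) := by gcongr; exact hG x hx
    _ = C * (x ^ a * x ^ b) := by ring

section ExpNorm

variable {E : Type*} [NormedAddCommGroup E] [NormedSpace ℝ E] [FiniteDimensional ℝ E]
  [MeasurableSpace E] [BorelSpace E] (μ : Measure E) [μ.IsAddHaarMeasure]

theorem integrable_exp_neg_mul_norm {c : ℝ} (hc : 0 < c) :
    Integrable (fun x : E => exp (-(c * ‖x‖))) μ := by
  rcases subsingleton_or_nontrivial E with hE | hE
  · exact .of_finite
  · refine (integrable_fun_norm_addHaar μ (f := fun r => exp (-(c * r)))).2 ?_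
    refine (integrableOn_rpow_mul_exp_neg_mul_rpow (s := (finrank ℝ E - 1 : ℕ))
      (neg_one_lt_zero.trans_le (Nat.cast_nonneg _)) one_pos hc).congr_fun
      (fun r _ => ?_) measurableSet_Ioi
    simp [rpow_one]

theorem integral_exp_neg_mul_norm {c : ℝ} (hc : 0 < c) :
    ∫ x, exp (-(c * ‖x‖)) ∂μ = c ^ (-(finrank ℝ E : ℝ)) * ∫ x, exp (-‖x‖) ∂μ := by
  have h := μ.integral_comp_smul (fun x : E => exp (-‖x‖)) c
  simp only [norm_smul, norm_of_nonneg hc.le, smul_eq_mul] at h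
  rw [h, abs_of_pos (by positivity), rpow_neg hc.le, rpow_natCast]

end ExpNorm

section BallExpPotential

variable {E : Type*} [NormedAddCommGroup E] [MeasurableSpace E]

noncomputable def ballExpPotential (μ : Measure E) (l : ℝ) (u : E) : ℝ :=
  ∫ y in closedBall (0 : E) 1, exp (-(l * ‖y - u‖)) ∂μ

variable {μ : Measure E}

theorem ballExpPotential_nonneg [OpensMeasurableSpace E] (l : ℝ) (u : E) :
    0 ≤ ballExpPotential μ l u :=
  setIntegral_nonneg measurableSet_closedBall fun _ _ => (exp_pos _).le

theorem ballExpPotential_eq_convolution [OpensMeasurableSpace E] (l : ℝ) :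
    ballExpPotential μ l = (closedBall (0 : E) 1).indicator 1
      ⋆[ContinuousLinearMap.lsmul ℝ ℝ, μ] fun x => exp (-(l * ‖x‖)) := by
  ext u
  simp only [ballExpPotential, convolution, ContinuousLinearMap.lsmul_apply, smul_eq_mul]
  rw [← integral_indicator measurableSet_closedBall]
  congr 1 with y
  by_cases hy : y ∈ closedBall (0 : E) 1 <;> simp [hy, norm_sub_rev]

variable [NormedSpace ℝ E] [FiniteDimensional ℝ E] [μ.IsAddHaarMeasure]

theorem ballExpPotential_le_measureReal {l : ℝ} (hl : 0 ≤ l) (u : E) :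
    ballExpPotential μ l u ≤ μ.real (closedBall 0 1) := by
  have h := norm_setIntegral_le_of_norm_le_const (μ := μ)
    (measure_closedBall_lt_top (x := (0 : E)) (r := 1))
    (f := fun y => exp (-(l * ‖y - u‖))) (C := 1) fun y _ => by
      rw [norm_of_nonneg (exp_pos _).le, exp_le_one_iff, neg_nonpos]
      positivity
  rw [one_mul, norm_eq_abs] at h
  exact (le_abs_self _).trans h

variable [BorelSpace E]

theorem ballExpPotential_le_integral {l : ℝ} (hl : 0 < l) (u : E) :
    ballExpPotential μ l u ≤ ∫ x, exp (-(l * ‖x‖)) ∂μ := by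
  calc ballExpPotential μ l u ≤ ∫ y, exp (-(l * ‖y - u‖)) ∂μ :=
        setIntegral_le_integral ((integrable_exp_neg_mul_norm μ hl).comp_sub_right u)
          (.of_forall fun _ => (exp_pos _).le)
    _ = ∫ x, exp (-(l * ‖x‖)) ∂μ := integral_sub_right_eq_self (fun x => exp (-(l * ‖x‖))) u

theorem integrable_indicator_closedBall_one :
    Integrable ((closedBall (0 : E) 1).indicator (1 : E → ℝ)) μ :=
  (integrableOn_const measure_closedBall_lt_top.ne).integrable_indicator measurableSet_closedBall

theorem integrable_ballExpPotential {l : ℝ} (hl : 0 < l) :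
    Integrable (ballExpPotential μ l) μ := by
  rw [ballExpPotential_eq_convolution]
  exact integrable_indicator_closedBall_one.integrable_convolution _
    (integrable_exp_neg_mul_norm μ hl)

theorem integral_ballExpPotential {l : ℝ} (hl : 0 < l) :
    ∫ u, ballExpPotential μ l u ∂μ = μ.real (closedBall 0 1) * ∫ x, exp (-(l * ‖x‖)) ∂μ := by
  rw [ballExpPotential_eq_convolution, integral_convolution (ContinuousLinearMap.lsmul ℝ ℝ)
    integrable_indicator_closedBall_one (integrable_exp_neg_mul_norm μ hl)]
  simp [integral_indicator_one measurableSet_closedBall]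

theorem integrable_ballExpPotential_rpow {l p : ℝ} (hl : 0 < l) (hp : 1 ≤ p) :
    Integrable (fun u => ballExpPotential μ l u ^ p) μ :=
  (integrable_ballExpPotential hl).rpow_of_le (ballExpPotential_nonneg l)
    (ballExpPotential_le_measureReal hl.le) hp

theorem integral_ballExpPotential_rpow_le {l p M : ℝ} (hl : 0 < l) (hp : 1 ≤ p)
    (hM : ∀ u, ballExpPotential μ l u ≤ M) :
    ∫ u, ballExpPotential μ l u ^ p ∂μ ≤ M ^ (p - 1) *
      (μ.real (closedBall 0 1) * (l ^ (-(finrank ℝ E : ℝ)) * ∫ x, exp (-‖x‖) ∂μ)) := by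
  rw [← integral_exp_neg_mul_norm μ hl, ← integral_ballExpPotential hl]
  exact integral_rpow_le_of_le (integrable_ballExpPotential hl) (ballExpPotential_nonneg l) hM hp

theorem exists_integral_ballExpPotential_rpow_le_rpow_neg_finrank {p : ℝ} (hp : 1 ≤ p) :
    ∃ C, ∀ l, 0 < l →
      ∫ u, ballExpPotential μ l u ^ p ∂μ ≤ C * l ^ (-(finrank ℝ E : ℝ)) := by
  refine ⟨μ.real (closedBall 0 1) ^ (p - 1) * μ.real (closedBall 0 1) * ∫ x, exp (-‖x‖) ∂μ,
    fun l hl => ?_⟩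
  exact (integral_ballExpPotential_rpow_le hl hp (ballExpPotential_le_measureReal hl.le)).trans_eq
    (by ring)

theorem exists_integral_ballExpPotential_rpow_le_rpow_neg_mul_finrank {p : ℝ} (hp : 1 ≤ p) :
    ∃ C, ∀ l, 0 < l →
      ∫ u, ballExpPotential μ l u ^ p ∂μ ≤ C * l ^ (-(p * finrank ℝ E)) := by
  set I := ∫ x : E, exp (-‖x‖) ∂μ
  refine ⟨I ^ (p - 1) * μ.real (closedBall 0 1) * I, fun l hl => ?_⟩
  have hM : ∀ u, ballExpPotential μ l u ≤ l ^ (-(finrank ℝ E : ℝ)) * I := fun u =>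
    (ballExpPotential_le_integral hl u).trans_eq (integral_exp_neg_mul_norm μ hl)
  have hI : 0 ≤ I := integral_nonneg fun _ => (exp_pos _).le
  refine (integral_ballExpPotential_rpow_le hl hp hM).trans_eq ?_
  rw [mul_rpow (rpow_nonneg hl.le _) hI, ← rpow_mul hl.le]
  have hexp : l ^ (-(p * finrank ℝ E)) =
      l ^ (-(finrank ℝ E : ℝ) * (p - 1)) * l ^ (-(finrank ℝ E : ℝ)) := by
    rw [← rpow_add hl]
    ring_nf
  rw [hexp]
  ring

end BallExpPotential

theorem stmt_7_general (d : ℕ) (γ : ℝ) (hγ : γ ∈ Set.Ioo (1 : ℝ) 2)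
    (F : ℝ → ℝ)
    (hF : ∀ l : ℝ, F l = ∫ u : EuclideanSpace ℝ (Fin d),
        (∫ y in Metric.closedBall (0 : EuclideanSpace ℝ (Fin d)) 1,
          Real.exp (-(l * ‖y - u‖))) ^ γ) :
    (∀ l : ℝ, 0 < l → Integrable (fun u : EuclideanSpace ℝ (Fin d) =>
        (∫ y in Metric.closedBall (0 : EuclideanSpace ℝ (Fin d)) 1,
          Real.exp (-(l * ‖y - u‖))) ^ γ)) ∧
    (fun l : ℝ => l ^ (-γ) * F l) =O[nhdsWithin 0 (Set.Ioi 0)]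
      (fun l : ℝ => l ^ (-γ - d)) ∧
    (fun l : ℝ => l ^ (-γ) * F l) =O[atTop]
      (fun l : ℝ => l ^ (-(γ * (1 + d)))) := by
  let μ : Measure (EuclideanSpace ℝ (Fin d)) := volume
  have hγ1 : 1 ≤ γ := hγ.1.le
  have hF0 : ∀ l, 0 < l → 0 ≤ F l := fun l _ =>
    (hF l).symm ▸ integral_nonneg fun u => rpow_nonneg (ballExpPotential_nonneg (μ := μ) l u) γ
  obtain ⟨C₀, hC₀⟩ := exists_integral_ballExpPotential_rpow_le_rpow_neg_finrank (μ := μ) hγ1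
  obtain ⟨C₁, hC₁⟩ := exists_integral_ballExpPotential_rpow_le_rpow_neg_mul_finrank (μ := μ) hγ1
  rw [finrank_euclideanSpace_fin] at hC₀ hC₁
  refine ⟨fun l hl => integrable_ballExpPotential_rpow (μ := μ) hl hγ1, ?_, ?_⟩
  · rw [sub_eq_add_neg]
    exact isBigO_rpow_mul_of_le self_mem_nhdsWithin hF0 fun l hl => (hF l).trans_le (hC₀ l hl)
  · convert isBigO_rpow_mul_of_le (eventually_gt_atTop 0) hF0
      (fun l hl => (hF l).trans_le (hC₁ l hl)) using 3
    ring

theorem stmt_7 (d : ℕ) (hd : 1 ≤ d) (γ : ℝ) (hγ : γ ∈ Set.Ioo (1 : ℝ) 2)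
    (F : ℝ → ℝ)
    (hF : ∀ l : ℝ, F l = ∫ u : EuclideanSpace ℝ (Fin d),
        (∫ y in Metric.closedBall (0 : EuclideanSpace ℝ (Fin d)) 1,
          Real.exp (-(l * ‖y - u‖))) ^ γ) :
    (∀ l : ℝ, 0 < l → Integrable (fun u : EuclideanSpace ℝ (Fin d) =>
        (∫ y in Metric.closedBall (0 : EuclideanSpace ℝ (Fin d)) 1,
          Real.exp (-(l * ‖y - u‖))) ^ γ)) ∧
    (fun l : ℝ => l ^ (-γ) * F l) =O[nhdsWithin 0 (Set.Ioi 0)]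
      (fun l : ℝ => l ^ (-γ - d)) ∧
    (fun l : ℝ => l ^ (-γ) * F l) =O[atTop]
      (fun l : ℝ => l ^ (-(γ * (1 + d)))) :=
  stmt_7_general d γ hγ F hF
end

section
/- Let d ≥ 1 and let Δ ⊂ ℝ^d be a bounded set with nonempty interior, let u be an interior point of Δ, and let λ > 0. Then T^d λ^d ∫_Δ e^{−Tλ‖y−u‖} dy → 2π^{d/2}Γ(d)/Γ(d/2) as T → ∞. -/
/-!
Substituting `z = T λ (y - u)` turns the quantity into the integral of `e^{-‖z‖}` over
the dilate `T λ • (Δ - u)`. Since `Δ - u` is a neighbourhood of `0`, these dilates exhaust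
`ℝ^d`, so by dominated convergence the integrals tend to
`∫ e^{-‖z‖} dz = Γ(d + 1) vol(B(0, 1))`, which simplifies to `2 π^{d/2} Γ(d) / Γ(d/2)`.
-/

open MeasureTheory Real Filter Module Metric Topology Pointwise

section

variable {E : Type*} [NormedAddCommGroup E] [NormedSpace ℝ E] [FiniteDimensional ℝ E]
  [MeasurableSpace E] [BorelSpace E] (μ : Measure E) [μ.IsAddHaarMeasure]

theorem integral_exp_neg_norm_eq_Gamma_mul_measureReal_ball :
    ∫ x, rexp (-‖x‖) ∂μ = Gamma (finrank ℝ E + 1) * μ.real (ball 0 1) := by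
  have hball := measure_unitBall_eq_integral_div_gamma μ zero_lt_one
  simp only [rpow_one, div_one] at hball
  have hΓ : 0 < Gamma (finrank ℝ E + 1) := Gamma_pos_of_pos (by positivity)
  have hI : 0 ≤ ∫ x, rexp (-‖x‖) ∂μ := integral_nonneg fun x => (exp_pos _).le
  rw [measureReal_def, hball, ENNReal.toReal_ofReal (div_nonneg hI hΓ.le)]
  field_simp

-- Non-integrable functions have Bochner integral `0`, so a nonzero integral forces integrability.
theorem integrable_exp_neg_norm [Nontrivial E] : Integrable (fun x => rexp (-‖x‖)) μ := by
  refine .of_integral_ne_zero ?_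
  rw [integral_exp_neg_norm_eq_Gamma_mul_measureReal_ball]
  have : 0 < μ.real (ball 0 1) :=
    ENNReal.toReal_pos (measure_ball_pos μ 0 one_pos).ne' measure_ball_lt_top.ne
  exact (mul_pos (Gamma_pos_of_pos (by positivity)) this).ne'

theorem pow_finrank_smul_setIntegral_comp_smul_sub {F : Type*} [NormedAddCommGroup F]
    [NormedSpace ℝ F] (f : E → F) (s : Set E) (u : E) {c : ℝ} (hc : 0 < c) :
    c ^ finrank ℝ E • ∫ y in s, f (c • (y - u)) ∂μ = ∫ z in c • ((· + u) ⁻¹' s), f z ∂μ := by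
  rw [← (measurePreserving_add_right μ u).setIntegral_preimage_emb
    (MeasurableEquiv.addRight u).measurableEmbedding]
  simp only [add_sub_cancel_right]
  rw [Measure.setIntegral_comp_smul_of_pos μ f _ hc, smul_inv_smul₀ (pow_ne_zero _ hc.ne')]

end

theorem tendsto_setIntegral_smul_atTop {E F : Type*} [NormedAddCommGroup E] [NormedSpace ℝ E]
    [MeasurableSpace E] [BorelSpace E] [NormedAddCommGroup F] [NormedSpace ℝ F]
    {μ : Measure E} {f : E → F} (hf : Integrable f μ) {s : Set E} (hs : MeasurableSet s)
    (hs₀ : s ∈ 𝓝 0) :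
    Tendsto (fun c : ℝ => ∫ x in c • s, f x ∂μ) atTop (𝓝 (∫ x, f x ∂μ)) := by
  have hmem (x : E) : ∀ᶠ c : ℝ in atTop, x ∈ c • s := by
    have : Tendsto (fun c : ℝ => c⁻¹ • x) atTop (𝓝 0) := by
      simpa using (tendsto_inv_atTop_zero (𝕜 := ℝ)).smul_const x
    filter_upwards [this.eventually hs₀, eventually_ne_atTop 0] with c hc hc₀
    exact (Set.mem_smul_set_iff_inv_smul_mem₀ hc₀ _ _).2 hc
  simp_rw [← integral_indicator (hs.const_smul₀ _)]
  refine tendsto_integral_filter_of_dominated_convergence (fun x => ‖f x‖)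
    (.of_forall fun c => hf.aestronglyMeasurable.indicator (hs.const_smul₀ c))
    (.of_forall fun c => .of_forall fun x => norm_indicator_le_norm_self f x) hf.norm
    (.of_forall fun x => tendsto_const_nhds.congr' ?_)
  filter_upwards [hmem x] with c hc
  exact (Set.indicator_of_mem hc f).symm

theorem integral_exp_neg_norm_euclideanSpace (ι : Type*) [Fintype ι] [Nonempty ι] :
    ∫ x : EuclideanSpace ℝ ι, rexp (-‖x‖) =
      2 * π ^ ((Fintype.card ι : ℝ) / 2) * Gamma (Fintype.card ι) /
        Gamma ((Fintype.card ι : ℝ) / 2) := by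
  have hn : (0 : ℝ) < Fintype.card ι := Nat.cast_pos.2 Fintype.card_pos
  have hsqrt : √π ^ Fintype.card ι = π ^ ((Fintype.card ι : ℝ) / 2) := by
    rw [sqrt_eq_rpow, ← rpow_natCast, ← rpow_mul pi_pos.le]
    ring_nf
  rw [integral_exp_neg_norm_eq_Gamma_mul_measureReal_ball, measureReal_def,
    EuclideanSpace.volume_ball, finrank_euclideanSpace, ENNReal.ofReal_one, one_pow, one_mul,
    ENNReal.toReal_ofReal (by positivity), hsqrt, Gamma_add_one hn.ne',
    Gamma_add_one (half_pos hn).ne']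
  have := Gamma_pos_of_pos (half_pos hn)
  field_simp

theorem stmt_9_general (d : ℕ) (hd : 1 ≤ d)
    (Δ : Set (EuclideanSpace ℝ (Fin d)))
    (hmeas : MeasurableSet Δ)
    (u : EuclideanSpace ℝ (Fin d)) (hu : u ∈ interior Δ)
    (l : ℝ) (hl : 0 < l) :
    Tendsto (fun T : ℝ =>
        T ^ d * l ^ d * ∫ y in Δ, Real.exp (-(T * l * ‖y - u‖)))
      atTop
      (nhds (2 * Real.pi ^ ((d : ℝ) / 2) * Real.Gamma d / Real.Gamma ((d : ℝ) / 2))) := by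
  have : Nonempty (Fin d) := ⟨⟨0, hd⟩⟩
  have hs : (· + u) ⁻¹' Δ ∈ 𝓝 0 :=
    (continuous_add_const u).continuousAt.preimage_mem_nhds
      (by simpa using mem_interior_iff_mem_nhds.1 hu)
  have hlim := (tendsto_setIntegral_smul_atTop (integrable_exp_neg_norm volume)
    (hmeas.preimage (measurable_add_const u)) hs).comp (tendsto_id.atTop_mul_const hl)
  rw [integral_exp_neg_norm_euclideanSpace, Fintype.card_fin] at hlim
  refine hlim.congr' ?_
  filter_upwards [eventually_gt_atTop 0] with T hT
  have hTl : 0 < T * l := mul_pos hT hl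
  rw [Function.comp_apply, id, ← pow_finrank_smul_setIntegral_comp_smul_sub volume _ _ u hTl,
    finrank_euclideanSpace_fin, smul_eq_mul, mul_pow]
  simp only [norm_smul, norm_of_nonneg hTl.le]

theorem stmt_9 (d : ℕ) (hd : 1 ≤ d)
    (Δ : Set (EuclideanSpace ℝ (Fin d)))
    (hmeas : MeasurableSet Δ) (hbdd : Bornology.IsBounded Δ)
    (u : EuclideanSpace ℝ (Fin d)) (hu : u ∈ interior Δ)
    (l : ℝ) (hl : 0 < l) :
    Tendsto (fun T : ℝ =>
        T ^ d * l ^ d * ∫ y in Δ, Real.exp (-(T * l * ‖y - u‖)))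
      atTop
      (nhds (2 * Real.pi ^ ((d : ℝ) / 2) * Real.Gamma d / Real.Gamma ((d : ℝ) / 2))) :=
  stmt_9_general d hd Δ hmeas u hu l hl
end
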